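/- Let R be a commutative ring. For a polynomial P ∈ R[t] with coefficients m_i ∈ R, define χ_j(P) = Σ_i (-1)^{i-j} · C(i,j) · m_i ∈ R. Let P, Q ∈ R[t] and j ≥ 0. If χ_r(P) = 0 and χ_r(Q) = 0 for all 0 ≤ r < j, then χ_k(P·Q) = 0 for 0 ≤ k < 2j, χ_{2j}(P·Q) = χ_j(P)·χ_j(Q), and χ_{2j+1}(P·Q) = χ_j(P)·χ_{j+1}(Q) + χ_{j+1}(P)·χ_j(Q). -/

import Mathlib

open Polynomial Finset

/-- The `j`-th higher Euler characteristic of a polynomial `P = Σ mᵢ tⁱ` over a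
commutative ring `R`: `χⱼ(P) = Σᵢ (-1)^(i-j) · C(i,j) · mᵢ`. -/
def higherEulerChar (R : Type*) [CommRing R] (j : ℕ) (P : Polynomial R) : R :=
  ∑ i ∈ Finset.range (P.natDegree + 1), (-1 : R) ^ (i - j) * (i.choose j • P.coeff i)

/-!
Substituting `t = s + 1` turns `χⱼ(P)` into the `j`-th coefficient of `P(s - 1)`, and this
substitution is multiplicative. The hypotheses say that `sʲ` divides both `P(s - 1)` and
`Q(s - 1)`, so their product is `s²ʲ` times the product of the cofactors, whose two lowest
coefficients are read off from the lowest coefficients of the cofactors.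
-/

lemma higherEulerChar_eq_coeff_taylor {R : Type*} [CommRing R] (j : ℕ) (P : R[X]) :
    higherEulerChar R j P = (taylor (-1) P).coeff j := by
  rw [taylor_apply, comp, eval₂_eq_sum_range, finsetSum_coeff, higherEulerChar]
  refine sum_congr rfl fun i _ => ?_
  rw [coeff_C_mul, coeff_X_add_C_pow, nsmul_eq_mul]
  ring

section

variable {R : Type*} [CommSemiring R] {A B : R[X]} {j : ℕ}

lemma coeff_mul_eq_zero_of_X_pow_dvd (hA : X ^ j ∣ A) (hB : X ^ j ∣ B) {k : ℕ}
    (hk : k < 2 * j) : (A * B).coeff k = 0 :=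
  X_pow_dvd_iff.mp (two_mul j ▸ pow_add (X : R[X]) j j ▸ mul_dvd_mul hA hB) k hk

lemma coeff_mul_two_mul_of_X_pow_dvd (hA : X ^ j ∣ A) (hB : X ^ j ∣ B) :
    (A * B).coeff (2 * j) = A.coeff j * B.coeff j := by
  obtain ⟨A, rfl⟩ := hA
  obtain ⟨B, rfl⟩ := hB
  have hAB : X ^ j * A * (X ^ j * B) = X ^ (2 * j) * (A * B) := by ring
  simp only [hAB, coeff_X_pow_mul', le_refl, if_true, Nat.sub_self, mul_coeff_zero]

lemma coeff_mul_two_mul_add_one_of_X_pow_dvd (hA : X ^ j ∣ A) (hB : X ^ j ∣ B) :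
    (A * B).coeff (2 * j + 1) = A.coeff j * B.coeff (j + 1) + A.coeff (j + 1) * B.coeff j := by
  obtain ⟨A, rfl⟩ := hA
  obtain ⟨B, rfl⟩ := hB
  have hAB : X ^ j * A * (X ^ j * B) = X ^ (2 * j) * (A * B) := by ring
  simp only [hAB, coeff_X_pow_mul', le_refl, Nat.le_succ, if_true, Nat.sub_self,
    Nat.add_sub_cancel_left, mul_coeff_one]

end

/-- Over any commutative ring `R` (e.g. the Grothendieck ring `K₀(𝒫)`), if
`χᵣ(P) = 0` and `χᵣ(Q) = 0` for all `0 ≤ r < j`, then `χₖ(P·Q) = 0` for `0 ≤ k < 2j`,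
`χ_{2j}(P·Q) = χⱼ(P)·χⱼ(Q)`, and `χ_{2j+1}(P·Q) = χⱼ(P)·χ_{j+1}(Q) + χ_{j+1}(P)·χⱼ(Q)`. -/
theorem higherEulerChar_mul (R : Type*) [CommRing R] (P Q : Polynomial R) (j : ℕ)
    (hP : ∀ r < j, higherEulerChar R r P = 0) (hQ : ∀ r < j, higherEulerChar R r Q = 0) :
    (∀ k < 2 * j, higherEulerChar R k (P * Q) = 0) ∧
      higherEulerChar R (2 * j) (P * Q) = higherEulerChar R j P * higherEulerChar R j Q ∧
        higherEulerChar R (2 * j + 1) (P * Q) =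
          higherEulerChar R j P * higherEulerChar R (j + 1) Q +
            higherEulerChar R (j + 1) P * higherEulerChar R j Q := by
  simp only [higherEulerChar_eq_coeff_taylor, taylor_mul] at hP hQ ⊢
  have hA := X_pow_dvd_iff.mpr hP
  have hB := X_pow_dvd_iff.mpr hQ
  exact ⟨fun k hk => coeff_mul_eq_zero_of_X_pow_dvd hA hB hk,
    coeff_mul_two_mul_of_X_pow_dvd hA hB, coeff_mul_two_mul_add_one_of_X_pow_dvd hA hB⟩
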